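/- Every semibounded form t on H admits a decomposition t = t_reg + t_sing with dom t = dom t_reg = dom t_sing, where t_reg is a closable semibounded form with the same lower bound behavior and t_sing is a nonnegative singular form. Explicitly, if Q is a representing map for t − c and P₀ is the orthogonal projection onto mul Q** (the multivalued part of the closure of Q), then t_reg[φ,ψ] = c⟨φ,ψ⟩ + ⟨(I−P₀)Qφ, (I−P₀)Qψ⟩ is closable and t_sing[φ,ψ] = ⟨P₀Qφ, P₀Qψ⟩ is singular. -/

import Mathlib

open Filter Topology
open scoped ComplexOrder

noncomputable section

variable {H K K' : Type*}

/-- Sesquilinear forms with domain `D`: linear in the first argument,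
conjugate-linear in the second. -/
abbrev Form [NormedAddCommGroup H] [InnerProductSpace ℂ H] (D : Submodule ℂ H) : Type _ :=
  ↥D →ₗ[ℂ] (↥D →ₛₗ[starRingEnd ℂ] ℂ)

section Defs

variable [NormedAddCommGroup H] [InnerProductSpace ℂ H]
  [NormedAddCommGroup K] [InnerProductSpace ℂ K]
  {D : Submodule ℂ H}

/-- `t[φ,φ] ≥ c‖φ‖²` on the domain (in the complex order, so diagonal values are real). -/
def BddBelowBy (t : Form D) (c : ℝ) : Prop :=
  ∀ φ : ↥D, (↑(c * ‖(φ : H)‖ ^ 2) : ℂ) ≤ t φ φ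

/-- The set of Rayleigh quotients of the form `t`; its infimum is the lower bound `m(t)`. -/
def rayleighSet (t : Form D) : Set ℝ :=
  {r : ℝ | ∃ φ : ↥D, (φ : H) ≠ 0 ∧ r = (t φ φ).re / ‖(φ : H)‖ ^ 2}

/-- `Q` is a representing map for the form `t - c` :
`t[φ,ψ] - c(φ,ψ) = (Qφ,Qψ)` (forms/inner products linear in the first entry). -/
def IsRepMap (t : Form D) (c : ℝ) (Q : ↥D →ₗ[ℂ] K) : Prop :=
  ∀ φ ψ : ↥D, t φ ψ - (c : ℂ) * (inner ℂ (ψ : H) (φ : H) : ℂ) = (inner ℂ (Q ψ) (Q φ) : ℂ)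

/-- The graph of a partially defined operator. -/
def graphOf (Q : ↥D →ₗ[ℂ] K) : Set (H × K) :=
  Set.range fun φ : ↥D => ((φ : H), Q φ)

/-- `Q` is a closed operator. -/
def OpClosed (Q : ↥D →ₗ[ℂ] K) : Prop := IsClosed (graphOf Q)

/-- `Q` is closable: the closure of its graph is again a graph. -/
def OpClosable (Q : ↥D →ₗ[ℂ] K) : Prop :=
  ∀ k : K, ((0 : H), k) ∈ closure (graphOf Q) → k = 0

/-- `Q` is singular: `ran Q ⊆ mul Q**`, equivalently every `(φ,0)` with `φ ∈ dom Q`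
belongs to the closure of the graph. -/
def OpSingular (Q : ↥D →ₗ[ℂ] K) : Prop :=
  ∀ φ : ↥D, ((φ : H), (0 : K)) ∈ closure (graphOf Q)

/-- `φ n →_t x` : convergence in `H` together with `t[φ_n - φ_m] → 0`. -/
def TConv (t : Form D) (φ : ℕ → ↥D) (x : H) : Prop :=
  Tendsto (fun n => (φ n : H)) atTop (nhds x) ∧
    Tendsto (fun p : ℕ × ℕ => t (φ p.1 - φ p.2) (φ p.1 - φ p.2)) (atTop ×ˢ atTop) (nhds 0)

/-- The form `t` is closable. -/
def FormClosable (t : Form D) : Prop :=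
  ∀ φ : ℕ → ↥D, TConv t φ 0 → Tendsto (fun n => t (φ n) (φ n)) atTop (nhds 0)

/-- The form `t` is closed. -/
def FormClosed (t : Form D) : Prop :=
  ∀ (φ : ℕ → ↥D) (x : H), TConv t φ x →
    ∃ hx : x ∈ D, Tendsto (fun n => t (φ n - ⟨x, hx⟩) (φ n - ⟨x, hx⟩)) atTop (nhds 0)

/-- The (nonnegative) form `t` is singular. -/
def FormSingular (t : Form D) : Prop :=
  ∀ ψ : ↥D, ∃ φ : ℕ → ↥D,
    Tendsto (fun n => (φ n : H)) atTop (nhds (ψ : H)) ∧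
      Tendsto (fun n => t (φ n) (φ n)) atTop (nhds 0)

end Defs

section Defs2

variable [NormedAddCommGroup H] [InnerProductSpace ℂ H]

/-- Order on forms: `t₁ ≤ t₂` iff `dom t₂ ⊆ dom t₁` and `t₁[φ] ≤ t₂[φ]` on `dom t₂`. -/
def FormLE {D₁ D₂ : Submodule ℂ H} (t₁ : Form D₁) (t₂ : Form D₂) : Prop :=
  ∃ h : D₂ ≤ D₁, ∀ φ : ↥D₂, t₁ ⟨(φ : H), h φ.2⟩ ⟨(φ : H), h φ.2⟩ ≤ t₂ φ φ

/-- `s` is an extension of the form `t` (`t ⊂ s`). -/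
def FormExtends {D₁ D₂ : Submodule ℂ H} (s : Form D₂) (t : Form D₁) : Prop :=
  ∃ h : D₁ ≤ D₂, ∀ φ ψ : ↥D₁, s ⟨(φ : H), h φ.2⟩ ⟨(ψ : H), h ψ.2⟩ = t φ ψ

/-- `r` is the regular part of `s` : a closable semibounded form below `s`
which dominates every closable semibounded form below `s`. -/
def IsRegularPart {D : Submodule ℂ H} (s r : Form D) : Prop :=
  FormClosable r ∧ (∃ c, BddBelowBy r c) ∧ FormLE r s ∧
    ∀ (Du : Submodule ℂ H) (u : Form Du), FormClosable u → (∃ cu, BddBelowBy u cu) →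
      FormLE u s → FormLE u r

end Defs2

section Rel

variable [NormedAddCommGroup H] [InnerProductSpace ℂ H]
  [NormedAddCommGroup K] [InnerProductSpace ℂ K] {D : Submodule ℂ H}

/-- A symmetric relation in `H`: `⟨φ',ψ⟩ = ⟨φ,ψ'⟩` for all members. -/
def IsSymmRel (R : Set (H × H)) : Prop :=
  ∀ p ∈ R, ∀ q ∈ R, (inner ℂ q.1 p.2 : ℂ) = (inner ℂ q.2 p.1 : ℂ)

/-- The adjoint of a linear relation in `H`. -/
def adjRelSet (R : Set (H × H)) : Set (H × H) :=
  {q | ∀ p ∈ R, (inner ℂ q.1 p.2 : ℂ) = (inner ℂ q.2 p.1 : ℂ)}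

/-- The relation `Q*Q + c` in `H`. -/
def StRel (Q : ↥D →ₗ[ℂ] K) (c : ℝ) : Set (H × H) :=
  {p | ∃ h : p.1 ∈ D, ∀ ψ : ↥D,
    (inner ℂ (Q ψ) (Q ⟨p.1, h⟩) : ℂ) = (inner ℂ (ψ : H) (p.2 - (c : ℂ) • p.1) : ℂ)}

/-- The relation `Q*Q** + c` in `H`, where `Q**` is the closure of the graph of `Q`. -/
def ARel (Q : ↥D →ₗ[ℂ] K) (c : ℝ) : Set (H × H) :=
  {p | ∃ g : K, (p.1, g) ∈ closure (graphOf Q) ∧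
    ∀ ψ : ↥D, (inner ℂ (Q ψ) g : ℂ) = (inner ℂ (ψ : H) (p.2 - (c : ℂ) • p.1) : ℂ)}

end Rel

/-! The orthogonal projection `P₀` onto `mul Q**` splits `Q = (I - P₀)Q + P₀Q` into pieces with
orthogonal ranges, so `t - c` is the sum of the forms they represent. Since `(φ, Qφ - P₀Qφ)` lies
in `Q**`, the closure of the graph of `(I - P₀)Q` stays inside `Q**` and inside the closed set
`{(x, k) | P₀ k = 0}`; it therefore meets `{0} × mul Q**` only at `0`, i.e. `(I - P₀)Q` is
closable. Applying `(x, k) ↦ (x, P₀ k)` to the same points shows that `(ψ, 0)` lies in the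
closure of the graph of `P₀Q`, i.e. `P₀Q` is singular. Finally the form represented by a closable
operator is closable (a `t`-Cauchy sequence `φₙ → 0` makes `Rφₙ` Cauchy, and its limit must be
`0`), and the form represented by a singular operator is singular. -/

open scoped InnerProductSpace

section

variable [NormedAddCommGroup H] [InnerProductSpace ℂ H]
  [NormedAddCommGroup K] [InnerProductSpace ℂ K] {D : Submodule ℂ H}

theorem closure_graphOf_eq (Q : ↥D →ₗ[ℂ] K) :
    closure (graphOf Q) =
      ((LinearMap.range (D.subtype.prod Q)).topologicalClosure : Set (H × K)) := by
  rw [Submodule.topologicalClosure_coe]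
  rfl

theorem sub_mem_closure_graphOf {Q : ↥D →ₗ[ℂ] K} {p q : H × K}
    (hp : p ∈ closure (graphOf Q)) (hq : q ∈ closure (graphOf Q)) :
    p - q ∈ closure (graphOf Q) := by
  rw [closure_graphOf_eq] at *
  exact Submodule.sub_mem _ hp hq

theorem mk_sub_mem_closure_graphOf {Q : ↥D →ₗ[ℂ] K} (φ : ↥D) {k : K}
    (hk : ((0 : H), k) ∈ closure (graphOf Q)) :
    ((φ : H), Q φ - k) ∈ closure (graphOf Q) := by
  simpa using sub_mem_closure_graphOf (subset_closure ⟨φ, rfl⟩) hk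

theorem LinearMap.IsSymmetricProjection.inner_sub_add_inner {P : K →ₗ[ℂ] K}
    (hP : P.IsSymmetricProjection) (x y : K) :
    ⟪x - P x, y - P y⟫_ℂ + ⟪P x, P y⟫_ℂ = ⟪x, y⟫_ℂ := by
  have hPP : ∀ z, P (P z) = P z := fun z => congrArg (· z) hP.isIdempotentElem.eq
  have h₁ : ⟪x, P y⟫_ℂ = ⟪P x, P y⟫_ℂ := by rw [hP.isSymmetric x (P y), hPP]
  have h₂ : ⟪P x, y⟫_ℂ = ⟪P x, P y⟫_ℂ := by rw [← hP.isSymmetric (P x) y, hPP]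
  simp only [inner_sub_left, inner_sub_right, h₁, h₂]
  ring

section RepMap

variable {t : Form D} {c : ℝ} {R : ↥D →ₗ[ℂ] K}

theorem IsRepMap.apply_self (ht : IsRepMap t c R) (φ : ↥D) :
    t φ φ = ((c * ‖(φ : H)‖ ^ 2 + ‖R φ‖ ^ 2 : ℝ) : ℂ) := by
  have h := ht φ φ
  rw [inner_self_eq_norm_sq_to_K, inner_self_eq_norm_sq_to_K] at h
  push_cast
  linear_combination h

theorem IsRepMap.bddBelowBy (ht : IsRepMap t c R) : BddBelowBy t c := fun φ => by
  rw [ht.apply_self, Complex.real_le_real]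
  exact le_add_of_nonneg_right (sq_nonneg _)

theorem IsRepMap.tendsto_norm_sub_of_tconv (ht : IsRepMap t c R) {φ : ℕ → ↥D} {x : H}
    (hφ : TConv t φ x) :
    Tendsto (fun p : ℕ × ℕ => ‖R (φ p.1) - R (φ p.2)‖) (atTop ×ˢ atTop) (𝓝 0) := by
  obtain ⟨hφx, hdiff⟩ := hφ
  have hsub : Tendsto (fun p : ℕ × ℕ => ‖(φ p.1 : H) - φ p.2‖) (atTop ×ˢ atTop) (𝓝 0) := by
    simpa using ((hφx.comp tendsto_fst).sub (hφx.comp tendsto_snd)).norm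
  have hsq : Tendsto (fun p : ℕ × ℕ => ‖R (φ p.1) - R (φ p.2)‖ ^ 2) (atTop ×ˢ atTop) (𝓝 0) := by
    have hlim := ((Complex.continuous_re.tendsto 0).comp hdiff).sub ((hsub.pow 2).const_mul c)
    rw [Complex.zero_re, zero_pow two_ne_zero, mul_zero, sub_zero] at hlim
    refine hlim.congr fun p => ?_
    rw [Function.comp_apply, ht.apply_self, Complex.ofReal_re, map_sub, Submodule.coe_sub]
    ring
  simpa [Real.sqrt_sq (norm_nonneg _)] using hsq.sqrt

theorem IsRepMap.formClosable [CompleteSpace K] (ht : IsRepMap t c R) (hR : OpClosable R) :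
    FormClosable t := by
  intro φ hφ
  have hcauchy : CauchySeq fun n => R (φ n) := by
    rw [cauchySeq_iff_tendsto_dist_atTop_0, ← prod_atTop_atTop_eq]
    simpa [dist_eq_norm] using ht.tendsto_norm_sub_of_tconv hφ
  obtain ⟨k, hk⟩ := cauchySeq_tendsto_of_complete hcauchy
  have hk0 : k = 0 := hR k <| isClosed_closure.mem_of_tendsto (hφ.1.prodMk_nhds hk)
    (Eventually.of_forall fun n => subset_closure ⟨φ n, rfl⟩)
  subst hk0
  have hlim := ((hφ.1.norm.pow 2).const_mul c).add (hk.norm.pow 2)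
  simp_rw [ht.apply_self, ← Complex.ofReal_zero, tendsto_ofReal_iff]
  simpa using hlim

theorem IsRepMap.formSingular (ht : IsRepMap t 0 R) (hR : OpSingular R) : FormSingular t := by
  intro ψ
  obtain ⟨p, hp, hpψ⟩ := mem_closure_iff_seq_limit.mp (hR ψ)
  choose φ hφ using hp
  obtain rfl : (fun n => ((φ n : H), R (φ n))) = p := funext hφ
  refine ⟨φ, hpψ.fst_nhds, ?_⟩
  simp_rw [ht.apply_self, ← Complex.ofReal_zero, tendsto_ofReal_iff]
  simpa using hpψ.snd_nhds.norm.pow 2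

end RepMap

section MulPart

variable {Q : ↥D →ₗ[ℂ] K} {P : K →L[ℂ] K}

theorem opClosable_sub_comp (hPmem : ∀ k : K, ((0 : H), P k) ∈ closure (graphOf Q))
    (hPfix : ∀ k : K, ((0 : H), k) ∈ closure (graphOf Q) → P k = k) :
    OpClosable (Q - (P : K →ₗ[ℂ] K) ∘ₗ Q) := by
  intro k hk
  have hle : closure (graphOf (Q - (P : K →ₗ[ℂ] K) ∘ₗ Q)) ⊆ closure (graphOf Q) :=
    closure_minimal (by rintro _ ⟨φ, rfl⟩; exact mk_sub_mem_closure_graphOf φ (hPmem _))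
      isClosed_closure
  have hker : closure (graphOf (Q - (P : K →ₗ[ℂ] K) ∘ₗ Q)) ⊆ {p | P p.2 = 0} :=
    closure_minimal (by rintro _ ⟨φ, rfl⟩; simp [hPfix _ (hPmem _)])
      (isClosed_eq (P.continuous.comp continuous_snd) continuous_const)
  rw [← hPfix k (hle hk)]
  exact hker hk

theorem opSingular_comp (hPmem : ∀ k : K, ((0 : H), P k) ∈ closure (graphOf Q))
    (hPfix : ∀ k : K, ((0 : H), k) ∈ closure (graphOf Q) → P k = k) :
    OpSingular ((P : K →ₗ[ℂ] K) ∘ₗ Q) := by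
  intro ψ
  have hmaps : Set.MapsTo (fun p : H × K => (p.1, P p.2)) (graphOf Q)
      (graphOf ((P : K →ₗ[ℂ] K) ∘ₗ Q)) := by
    rintro _ ⟨φ, rfl⟩
    exact ⟨φ, rfl⟩
  simpa [hPfix _ (hPmem _)] using
    map_mem_closure (by fun_prop) (mk_sub_mem_closure_graphOf ψ (hPmem (Q ψ))) hmaps

end MulPart

end

theorem statement8_general [NormedAddCommGroup H] [InnerProductSpace ℂ H]
    [NormedAddCommGroup K] [InnerProductSpace ℂ K] [CompleteSpace K]
    {D : Submodule ℂ H} (t : Form D) (c : ℝ)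
    (Q : ↥D →ₗ[ℂ] K) (hQ : IsRepMap t c Q)
    (P₀ : K →L[ℂ] K)
    (hPmem : ∀ k : K, ((0 : H), P₀ k) ∈ closure (graphOf Q))
    (hPfix : ∀ k : K, ((0 : H), k) ∈ closure (graphOf Q) → P₀ k = k)
    (hPsa : ∀ k m : K, (inner ℂ (P₀ k) m : ℂ) = (inner ℂ k (P₀ m) : ℂ))
    (treg tsing : Form D)
    (hreg : ∀ φ ψ : ↥D, treg φ ψ = (c : ℂ) * (inner ℂ (ψ : H) (φ : H) : ℂ) +
      (inner ℂ (Q ψ - P₀ (Q ψ)) (Q φ - P₀ (Q φ)) : ℂ))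
    (hsing : ∀ φ ψ : ↥D, tsing φ ψ = (inner ℂ (P₀ (Q ψ)) (P₀ (Q φ)) : ℂ)) :
    (∀ φ ψ : ↥D, t φ ψ = treg φ ψ + tsing φ ψ) ∧
      FormClosable treg ∧ BddBelowBy treg c ∧
      FormSingular tsing ∧ BddBelowBy tsing 0 := by
  have hP : (P₀ : K →ₗ[ℂ] K).IsSymmetricProjection :=
    ⟨LinearMap.ext fun k => hPfix _ (hPmem k), hPsa⟩
  have hreg' : IsRepMap treg c (Q - (P₀ : K →ₗ[ℂ] K) ∘ₗ Q) := fun φ ψ => by simp [hreg]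
  have hsing' : IsRepMap tsing 0 ((P₀ : K →ₗ[ℂ] K) ∘ₗ Q) := fun φ ψ => by simp [hsing]
  refine ⟨fun φ ψ => ?_, hreg'.formClosable (opClosable_sub_comp hPmem hPfix),
    hreg'.bddBelowBy, hsing'.formSingular (opSingular_comp hPmem hPfix), hsing'.bddBelowBy⟩
  have hsplit := hP.inner_sub_add_inner (Q ψ) (Q φ)
  rw [ContinuousLinearMap.coe_coe] at hsplit
  rw [hreg, hsing, add_assoc, hsplit]
  linear_combination hQ φ ψ

/-- the Lebesgue decomposition `t = t_reg + t_sing` obtained from a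
representing map `Q` and the orthogonal projection `P₀` onto `mul Q**`. -/
theorem statement8 [NormedAddCommGroup H] [InnerProductSpace ℂ H] [CompleteSpace H]
    [NormedAddCommGroup K] [InnerProductSpace ℂ K] [CompleteSpace K]
    {D : Submodule ℂ H} (t : Form D) (c : ℝ)
    (hbdd : BddBelowBy t c) (Q : ↥D →ₗ[ℂ] K) (hQ : IsRepMap t c Q)
    (P₀ : K →L[ℂ] K)
    (hPmem : ∀ k : K, ((0 : H), P₀ k) ∈ closure (graphOf Q))
    (hPfix : ∀ k : K, ((0 : H), k) ∈ closure (graphOf Q) → P₀ k = k)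
    (hPsa : ∀ k m : K, (inner ℂ (P₀ k) m : ℂ) = (inner ℂ k (P₀ m) : ℂ))
    (treg tsing : Form D)
    (hreg : ∀ φ ψ : ↥D, treg φ ψ = (c : ℂ) * (inner ℂ (ψ : H) (φ : H) : ℂ) +
      (inner ℂ (Q ψ - P₀ (Q ψ)) (Q φ - P₀ (Q φ)) : ℂ))
    (hsing : ∀ φ ψ : ↥D, tsing φ ψ = (inner ℂ (P₀ (Q ψ)) (P₀ (Q φ)) : ℂ)) :
    (∀ φ ψ : ↥D, t φ ψ = treg φ ψ + tsing φ ψ) ∧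
      FormClosable treg ∧ BddBelowBy treg c ∧
      FormSingular tsing ∧ BddBelowBy tsing 0 :=
  statement8_general t c Q hQ P₀ hPmem hPfix hPsa treg tsing hreg hsing
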